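/- Let k be an algebraically closed field of characteristic p > 3, and let A = k[x, y]/(x^{p^2 − p}·y^p + y^{p^2} − x^{p^2 − 1}·y − x), which is an integral domain, with fraction field K. Then the element x^{p^2 − p}·y^p + y^{p^2} of K is not a p^2-th power in K, i.e. there is no g ∈ K with g^{p^2} = x^{p^2 − p}·y^p + y^{p^2}. -/

import Mathlib

set_option synthInstance.maxHeartbeats 1000000
set_option maxHeartbeats 1000000

open MvPolynomial in
/-- The affine equation `x^{p²-p}·y^p + y^{p²} - x^{p²-1}·y - x` of the chart
`Z = 1` of the plane curve of Example 2.3 (variables `X 0 = x`, `X 1 = y`). -/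
noncomputable abbrev nonTangoAffinePoly (k : Type) [Field k] (p : ℕ) :
    MvPolynomial (Fin 2) k :=
  X 0 ^ (p ^ 2 - p) * X 1 ^ p + X 1 ^ p ^ 2
    - X 0 ^ (p ^ 2 - 1) * X 1 - X 0

/-- The affine coordinate ring
`A = k[x, y]/(x^{p²-p}·y^p + y^{p²} - x^{p²-1}·y - x)` of Example 2.3. -/
abbrev nonTangoAffineRing (k : Type) [Field k] (p : ℕ) : Type :=
  MvPolynomial (Fin 2) k ⧸ Ideal.span {nonTangoAffinePoly k p}

/-!
Since `x^{p²-p} y^p + y^{p²} = (x^{p-1} y + y^p)^p` and Frobenius is injective on `K`, a `p²`-th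
root `g` would give `(g - y)^p = x^{p-1} y`. The curve has a branch through the origin on which
`y = t` and `x = L(t) ∈ k⟦t⟧` with `L ≡ t^{p²} mod t^{p²+1}`; the resulting map `A → k⟦t⟧` is
injective because `A` is integral over `k[x]` and `L` is transcendental over `k`. Along it
`x^{p-1} y` has `t`-adic order `(p-1)p² + 1`, which is prime to `p`, so it is not a `p`-th power
in `K`.
-/

theorem IsAdicComplete.exists_isFixedPt {R : Type*} [CommRing R] (I : Ideal R)
    [IsAdicComplete I R] (F : R → R)
    (hF : ∀ a b n, a - b ∈ I ^ n → F a - F b ∈ I ^ (n + 1)) : ∃ a, Function.IsFixedPt F a := by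
  have smodEq_iff (a b : R) (n : ℕ) :
      a ≡ b [SMOD (I ^ n • ⊤ : Submodule R R)] ↔ a - b ∈ I ^ n := by
    rw [SModEq.sub_mem, ← Ideal.one_eq_top, Ideal.smul_eq_mul, mul_one]
  set c : ℕ → R := fun n => F^[n] 0
  have hc (n : ℕ) : c (n + 1) = F (c n) := Function.iterate_succ_apply' F n 0
  have step (n : ℕ) : c n - c (n + 1) ∈ I ^ n := by
    induction n with
    | zero => simp
    | succ n ih => rw [hc, hc]; exact hF _ _ _ ih
  have cauchy {m n : ℕ} (hmn : m ≤ n) : c m ≡ c n [SMOD (I ^ m • ⊤ : Submodule R R)] := by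
    induction n, hmn using Nat.le_induction with
    | base => rfl
    | succ n hmn ih => exact ih.trans ((smodEq_iff _ _ _).2 (Ideal.pow_le_pow_right hmn (step n)))
  obtain ⟨L, hL⟩ := IsPrecomplete.prec' c cauchy
  refine ⟨L, IsHausdorff.eq_iff_smodEq.2 fun n => (smodEq_iff _ _ _).2 ?_⟩
  have hFL : F L - c (n + 1) ∈ I ^ (n + 1) := by
    rw [hc]; exact hF _ _ _ ((smodEq_iff _ _ _).1 (hL n).symm)
  have hcL : c (n + 1) - L ∈ I ^ (n + 1) := (smodEq_iff _ _ _).1 (hL (n + 1))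
  exact Ideal.pow_le_pow_right n.le_succ (by simpa using add_mem hFL hcL)

theorem RingHom.injective_of_isIntegral_of_injective_comp {R A S : Type*} [CommRing R]
    [CommRing A] [IsDomain A] [CommRing S] {θ : R →+* A} (hθ : θ.IsIntegral) (φ : A →+* S)
    (h : Function.Injective (φ.comp θ)) : Function.Injective φ := by
  let _ := θ.toAlgebra
  have : Algebra.IsIntegral R A := ⟨hθ⟩
  have : Nontrivial R := θ.domain_nontrivial
  rw [injective_iff_ker_eq_bot]
  refine Ideal.eq_bot_of_comap_eq_bot (R := R) ?_
  rw [RingHom.comap_ker]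
  exact (injective_iff_ker_eq_bot _).1 h

theorem sub_pow_char_of_pow_sq_eq {R : Type*} [CommRing R] [IsReduced R] {p : ℕ} [Fact p.Prime]
    [CharP R p] {g x y : R} (h : g ^ p ^ 2 = x ^ (p ^ 2 - p) * y ^ p + y ^ p ^ 2) :
    (g - y) ^ p = x ^ (p - 1) * y := by
  have hsq : x ^ (p ^ 2 - p) * y ^ p + y ^ p ^ 2 = (x ^ (p - 1) * y + y ^ p) ^ p := by
    rw [add_pow_char, mul_pow, ← pow_mul, ← pow_mul, Nat.sub_mul, one_mul, sq]
  have hg : g ^ p = x ^ (p - 1) * y + y ^ p := by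
    apply frobenius_inj R p
    rw [frobenius_def, frobenius_def, ← pow_mul, ← sq, h, hsq]
  rw [sub_pow_char, hg, add_sub_cancel_right]

namespace PowerSeries

theorem transcendental_of_constantCoeff_eq_zero {R : Type*} [CommRing R] [IsDomain R]
    {L : R⟦X⟧} (h0 : constantCoeff L = 0) (hL : L ≠ 0) : Transcendental R L := by
  rintro ⟨P, hP, hPL⟩
  obtain ⟨Q, hPQ, hQ⟩ := P.exists_eq_pow_rootMultiplicity_mul_and_not_dvd hP 0
  rw [map_zero, sub_zero, Polynomial.X_dvd_iff] at hQ
  rw [hPQ, map_zero, sub_zero, map_mul, map_pow, Polynomial.aeval_X] at hPL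
  have hQL : constantCoeff (Polynomial.aeval L Q) = Q.coeff 0 := by
    rw [Polynomial.aeval_def, Polynomial.hom_eval₂, h0, Polynomial.eval₂_at_zero]
    simp
  rw [(mul_eq_zero.1 hPL).resolve_left (pow_ne_zero _ hL), map_zero] at hQL
  exact hQ hQL.symm

theorem order_eq_of_X_pow_succ_dvd_sub {R : Type*} [Ring R] [Nontrivial R] {f : R⟦X⟧} {n : ℕ}
    (h : X ^ (n + 1) ∣ f - X ^ n) : order f = n := by
  have hcoeff (i : ℕ) (hi : i ≤ n) : coeff i f = if i = n then 1 else 0 := by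
    rw [← coeff_X_pow, ← sub_eq_zero, ← map_sub]
    exact X_pow_dvd_iff.1 h i (Nat.lt_succ_of_le hi)
  refine order_eq_nat.2 ⟨by simp [hcoeff n le_rfl], fun i hi => ?_⟩
  simp [hcoeff i hi.le, hi.ne]

theorem not_exists_pow_eq_algebraMap_of_order_eq {A R : Type*} [CommRing A] [IsDomain A]
    [CommRing R] [IsDomain R] {p : ℕ} (φ : A →+* R⟦X⟧) (hφ : Function.Injective φ) {c : A}
    {n : ℕ} (hc : (φ c).order = n) (hpn : ¬ p ∣ n) :
    ¬ ∃ g : FractionRing A, g ^ p = algebraMap A (FractionRing A) c := by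
  rintro ⟨g, hg⟩
  obtain ⟨⟨a, b⟩, hab⟩ := IsLocalization.surj (nonZeroDivisors A) g
  have habc : a ^ p = c * b ^ p := by
    apply IsFractionRing.injective A (FractionRing A)
    rw [map_pow, map_mul, map_pow, ← hab, mul_pow, hg]
  have hb : φ b ≠ 0 := (map_ne_zero_iff φ hφ).2 (nonZeroDivisors.ne_zero b.2)
  have hord := congrArg (fun f => order (φ f)) habc
  simp only [map_pow, map_mul, order_pow, order_mul, hc, nsmul_eq_mul] at hord
  rw [← coe_toNat_order hb] at hord
  cases ha : (φ a).order with
  | top =>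
    rcases eq_or_ne p 0 with rfl | hp
    · simp only [CharP.cast_eq_zero, zero_mul, add_zero] at hord
      exact hpn (by rw [Nat.cast_eq_zero.1 hord.symm])
    · rw [ha, ENat.mul_top (by exact_mod_cast hp)] at hord
      exact absurd hord (by norm_cast)
  | coe m =>
    rw [ha] at hord
    have hnat : p * m = n + p * (φ b).order.toNat := by exact_mod_cast hord
    exact hpn ((Nat.dvd_add_left (dvd_mul_right p _)).1 (hnat ▸ dvd_mul_right p m))

end PowerSeries

namespace NonTango

variable (k : Type) [Field k] (p : ℕ)

noncomputable abbrev xCoord : nonTangoAffineRing k p := Ideal.Quotient.mk _ (MvPolynomial.X 0)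

noncomputable abbrev yCoord : nonTangoAffineRing k p := Ideal.Quotient.mk _ (MvPolynomial.X 1)

section

open Polynomial

theorem isIntegral_aeval_xCoord [Fact p.Prime] :
    (aeval (R := k) (xCoord k p)).toRingHom.IsIntegral := by
  have hy : (aeval (R := k) (xCoord k p)).toRingHom.IsIntegralElem (yCoord k p) := by
    have hp := (Fact.out : p.Prime).two_le
    refine ⟨X ^ p ^ 2 + C (X ^ (p ^ 2 - p)) * X ^ p - C (X ^ (p ^ 2 - 1)) * X - C X, ?_, ?_⟩
    · have : p < p ^ 2 := by nlinarith
      monicity!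
      rw [if_pos (by omega), if_neg (by omega), if_neg (by omega)]
      simp
    · have hf : Ideal.Quotient.mk (Ideal.span {nonTangoAffinePoly k p})
          (nonTangoAffinePoly k p) = 0 :=
        Ideal.Quotient.eq_zero_iff_mem.2 (Ideal.mem_span_singleton_self _)
      simp only [nonTangoAffinePoly, map_sub, map_add, map_mul, map_pow] at hf
      simp only [eval₂_sub, eval₂_add, eval₂_mul, eval₂_pow, eval₂_X, eval₂_C,
        AlgHom.toRingHom_eq_coe, RingHom.coe_coe, map_pow, aeval_X]
      linear_combination hf
  intro a
  obtain ⟨P, rfl⟩ := Ideal.Quotient.mk_surjective a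
  induction P using MvPolynomial.induction_on with
  | C c =>
    have := RingHom.isIntegralElem_map (aeval (R := k) (xCoord k p)).toRingHom (x := C c)
    rwa [AlgHom.toRingHom_eq_coe, RingHom.coe_coe, aeval_C] at this
  | add P Q hP hQ => rw [map_add]; exact hP.add _ hQ
  | mul_X P i hP =>
    rw [map_mul]
    refine hP.mul _ ?_
    fin_cases i
    · have := RingHom.isIntegralElem_map (aeval (R := k) (xCoord k p)).toRingHom (x := X)
      rwa [AlgHom.toRingHom_eq_coe, RingHom.coe_coe, aeval_X] at this
    · exact hy

end

open PowerSeries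

noncomputable def branchMap (w : k⟦X⟧) : k⟦X⟧ :=
  w ^ (p ^ 2 - p) * X ^ p + X ^ p ^ 2 - w ^ (p ^ 2 - 1) * X

variable {k p} in
theorem branchMap_sub_mem (hp : p ≠ 0) {a b : k⟦X⟧} {n : ℕ}
    (h : a - b ∈ Ideal.span {X} ^ n) :
    branchMap k p a - branchMap k p b ∈ Ideal.span {X} ^ (n + 1) := by
  have hX : (X : k⟦X⟧) ∈ Ideal.span {X} := Ideal.mem_span_singleton_self X
  have hpow (m : ℕ) : a ^ m - b ^ m ∈ Ideal.span {X} ^ n :=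
    Ideal.mem_of_dvd _ (sub_dvd_pow_sub_pow a b m) h
  have : branchMap k p a - branchMap k p b = (a ^ (p ^ 2 - p) - b ^ (p ^ 2 - p)) * X ^ p
      - (a ^ (p ^ 2 - 1) - b ^ (p ^ 2 - 1)) * X := by
    unfold branchMap; ring
  rw [this, pow_succ]
  exact sub_mem (Ideal.mul_mem_mul (hpow _) (Ideal.pow_mem_of_mem _ hX p (Nat.pos_of_ne_zero hp)))
    (Ideal.mul_mem_mul (hpow _) hX)

variable [Fact p.Prime]

/-- The `x`-coordinate of the branch of the curve through the origin, in the parameter `t = y`: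
the curve equation says exactly that it is a fixed point of `branchMap`. -/
noncomputable def branch : k⟦X⟧ :=
  (IsAdicComplete.exists_isFixedPt (Ideal.span {X}) (branchMap k p)
    fun _ _ _ => branchMap_sub_mem (Fact.out : p.Prime).ne_zero).choose

theorem branchMap_branch : branchMap k p (branch k p) = branch k p :=
  (IsAdicComplete.exists_isFixedPt (Ideal.span {X}) (branchMap k p)
    fun _ _ _ => branchMap_sub_mem (Fact.out : p.Prime).ne_zero).choose_spec

theorem X_pow_succ_dvd_branch_sub {n : ℕ} (h : X ^ n ∣ branch k p) :
    (X : k⟦X⟧) ^ (n + 1) ∣ branch k p - X ^ p ^ 2 := by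
  have hp := (Fact.out : p.Prime).two_le
  have hdvd {m e : ℕ} (hm : 1 ≤ m) (he : 1 ≤ e) :
      (X : k⟦X⟧) ^ (n + 1) ∣ branch k p ^ m * X ^ e :=
    calc (X : k⟦X⟧) ^ (n + 1) ∣ X ^ (n * m + e) := pow_dvd_pow X (by nlinarith)
      _ = (X ^ n) ^ m * X ^ e := by rw [pow_add, pow_mul]
      _ ∣ branch k p ^ m * X ^ e := mul_dvd_mul (pow_dvd_pow_of_dvd h m) dvd_rfl
  have hsub : branch k p - X ^ p ^ 2
      = branch k p ^ (p ^ 2 - p) * X ^ p - branch k p ^ (p ^ 2 - 1) * X ^ 1 := by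
    conv_lhs => rw [← branchMap_branch k p]
    unfold branchMap; ring
  have : 2 * p ≤ p ^ 2 := by nlinarith
  rw [hsub]
  exact dvd_sub (hdvd (by omega) (by omega)) (hdvd (by omega) le_rfl)

theorem X_pow_dvd_branch {n : ℕ} (hn : n ≤ p ^ 2) : (X : k⟦X⟧) ^ n ∣ branch k p := by
  induction n with
  | zero => exact one_dvd _
  | succ n ih =>
    simpa using dvd_add (X_pow_succ_dvd_branch_sub k p (ih (by omega))) (pow_dvd_pow X hn)

theorem order_branch : order (branch k p) = (p ^ 2 : ℕ) :=
  order_eq_of_X_pow_succ_dvd_sub (X_pow_succ_dvd_branch_sub k p (X_pow_dvd_branch k p le_rfl))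

theorem transcendental_branch : Transcendental k (branch k p) := by
  have h0 : constantCoeff (branch k p) = 0 :=
    X_dvd_iff.1 (by simpa using X_pow_dvd_branch k p (pow_pos (Fact.out : p.Prime).pos 2))
  refine transcendental_of_constantCoeff_eq_zero h0 fun h => ?_
  have := order_branch k p
  rw [h, order_zero] at this
  exact ENat.top_ne_natCast _ this

theorem aeval_nonTangoAffinePoly :
    MvPolynomial.aeval ![branch k p, X] (nonTangoAffinePoly k p) = 0 := by
  have h := branchMap_branch k p
  unfold branchMap at h
  simp only [nonTangoAffinePoly, map_add, map_sub, map_mul, map_pow, MvPolynomial.aeval_X,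
    Matrix.cons_val_zero, Matrix.cons_val_one]
  linear_combination h

noncomputable def param : nonTangoAffineRing k p →ₐ[k] k⟦X⟧ :=
  Ideal.Quotient.liftₐ _ (MvPolynomial.aeval ![branch k p, X]) fun a ha => by
    obtain ⟨c, rfl⟩ := Ideal.mem_span_singleton'.1 ha
    rw [map_mul, aeval_nonTangoAffinePoly, mul_zero]

theorem param_mk (P : MvPolynomial (Fin 2) k) :
    param k p (Ideal.Quotient.mk _ P) = MvPolynomial.aeval ![branch k p, X] P :=
  rfl

theorem param_xCoord : param k p (xCoord k p) = branch k p := by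
  simp [param_mk]

theorem param_yCoord : param k p (yCoord k p) = X := by
  simp [param_mk]

theorem param_injective [IsDomain (nonTangoAffineRing k p)] : Function.Injective (param k p) := by
  refine RingHom.injective_of_isIntegral_of_injective_comp (isIntegral_aeval_xCoord k p)
    (param k p).toRingHom ?_
  have hcomp : (param k p).comp (Polynomial.aeval (xCoord k p))
      = Polynomial.aeval (branch k p) := by
    rw [← param_xCoord, Polynomial.aeval_algHom]
  have := transcendental_iff_injective.1 (transcendental_branch k p)
  rwa [← hcomp] at this

theorem not_exists_pow_eq_xCoord_pow_mul_yCoord [IsDomain (nonTangoAffineRing k p)] :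
    ¬ ∃ h : FractionRing (nonTangoAffineRing k p),
      h ^ p = algebraMap _ _ (xCoord k p ^ (p - 1) * yCoord k p) := by
  refine not_exists_pow_eq_algebraMap_of_order_eq (param k p).toRingHom (param_injective k p)
    (n := (p - 1) * p ^ 2 + 1) ?_ ?_
  · simp [order_mul, order_pow, order_branch, param_xCoord, param_yCoord]
  · intro hdvd
    exact (Fact.out : p.Prime).not_dvd_one
      ((Nat.dvd_add_right ((dvd_pow_self p two_ne_zero).mul_left _)).1 hdvd)

end NonTango

open MvPolynomial in
theorem statement18_general (k : Type) [Field k]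
    (p : ℕ) [Fact p.Prime] [CharP k p]
    [IsDomain (nonTangoAffineRing k p)] :
    ¬ ∃ g : FractionRing (nonTangoAffineRing k p),
      g ^ p ^ 2 =
        algebraMap (nonTangoAffineRing k p) (FractionRing (nonTangoAffineRing k p))
          (Ideal.Quotient.mk (Ideal.span {nonTangoAffinePoly k p})
            (X 0 ^ (p ^ 2 - p) * X 1 ^ p + X 1 ^ p ^ 2)) := by
  rintro ⟨g, hg⟩
  have : CharP (FractionRing (nonTangoAffineRing k p)) p :=
    charP_of_injective_algebraMap (algebraMap k _).injective p
  refine NonTango.not_exists_pow_eq_xCoord_pow_mul_yCoord k p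
    ⟨g - algebraMap _ _ (NonTango.yCoord k p), ?_⟩
  rw [map_mul, map_pow]
  apply sub_pow_char_of_pow_sq_eq
  simpa only [map_add, map_mul, map_pow] using hg

open MvPolynomial in
/-- Let `k` be an algebraically closed field of
characteristic `p > 3` and `A = k[x, y]/(x^{p²-p}·y^p + y^{p²} - x^{p²-1}·y - x)`,
an integral domain with fraction field `K`.  Then the element
`x^{p²-p}·y^p + y^{p²}` of `K` is not a `p²`-th power in `K`. -/
theorem statement18 (k : Type) [Field k] [IsAlgClosed k]
    (p : ℕ) [Fact p.Prime] [CharP k p] (hp : 3 < p)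
    [IsDomain (nonTangoAffineRing k p)] :
    ¬ ∃ g : FractionRing (nonTangoAffineRing k p),
      g ^ p ^ 2 =
        algebraMap (nonTangoAffineRing k p) (FractionRing (nonTangoAffineRing k p))
          (Ideal.Quotient.mk (Ideal.span {nonTangoAffinePoly k p})
            (X 0 ^ (p ^ 2 - p) * X 1 ^ p + X 1 ^ p ^ 2)) :=
  statement18_general k p
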